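/- In the two-user routing game on the load-balancing network, if additionally 0 < 4δ < r, c ≥ 4L and c < (r − 4δ)L/δ, then the selfish user 2 also strictly benefits from user 1's unilateral altruism: his cost at the altruistic equilibrium profile (r, r − δ) is strictly smaller than his cost at the selfish Nash equilibrium, i.e., J₂(r, r − δ) = δ(c + 2L) < rL + (r/2 − ζ)c = J₂(r/2 + ζ, r/2 + ζ), where ζ = cδ/(2L). -/

import Mathlib

/-- Elbow latency function with parameters `r, L, δ`. -/
noncomputable def T (r L δ x : ℝ) : ℝ := max 0 (L / δ * (x - r) + L)

/-- Cost of user 1 in the two-user load-balancing game. -/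
noncomputable def J₁ (r L δ c x₁ x₂ : ℝ) : ℝ :=
  x₁ * T r L δ (x₁ + (r - x₂)) + (r - x₁) * (c + T r L δ (x₂ + (r - x₁)))

/-- Cost of user 2 in the two-user load-balancing game. -/
noncomputable def J₂ (r L δ c x₁ x₂ : ℝ) : ℝ :=
  x₂ * T r L δ (x₂ + (r - x₁)) + (r - x₂) * (c + T r L δ (x₁ + (r - x₂)))

/-!
At the altruistic profile `(r, r - δ)` the link loads are `r - δ` and `r + δ`, exactly where the
elbow latency is `0` and `2L`; at any symmetric profile both loads equal `r`, where the latency is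
`L`. The comparison of the two costs, after clearing the denominator `2L`, is the bound
`c δ + 4 δ L < r L` multiplied by `c` and by `2L`.
-/

theorem T_self (r δ : ℝ) {L : ℝ} (hL : 0 ≤ L) : T r L δ r = L := by
  simp [T, hL]

theorem T_sub_self (r L : ℝ) {δ : ℝ} (hδ : δ ≠ 0) : T r L δ (r - δ) = 0 := by
  have : L / δ * (r - δ - r) + L = 0 := by field_simp; ring
  rw [T, this, max_self]

theorem T_add_self (r : ℝ) {L δ : ℝ} (hδ : δ ≠ 0) (hL : 0 ≤ L) : T r L δ (r + δ) = 2 * L := by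
  have : L / δ * (r + δ - r) + L = 2 * L := by field_simp; ring
  rw [T, this, max_eq_right (by linarith)]

theorem J₂_diag (r δ c x : ℝ) {L : ℝ} (hL : 0 ≤ L) :
    J₂ r L δ c x x = r * L + (r - x) * c := by
  rw [J₂, show x + (r - x) = r by ring, T_self r δ hL]
  ring

theorem J₂_altruistic (r c : ℝ) {L δ : ℝ} (hδ : δ ≠ 0) (hL : 0 ≤ L) :
    J₂ r L δ c r (r - δ) = δ * (c + 2 * L) := by
  rw [J₂, show r - δ + (r - r) = r - δ by ring, show r + (r - (r - δ)) = r + δ by ring,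
    T_sub_self r L hδ, T_add_self r hδ hL]
  ring

theorem altruistic_cost_lt_nash_cost {r L δ c : ℝ} (hδ : 0 < δ) (hL : 0 < L) (hc : 0 < c)
    (hcδ : c * δ + 4 * δ * L < r * L) :
    δ * (c + 2 * L) < r * L + (r / 2 - c * δ / (2 * L)) * c := by
  have h2L : 0 < 2 * L := by positivity
  rw [show r * L + (r / 2 - c * δ / (2 * L)) * c
      = (2 * r * L * L + r * c * L - c * c * δ) / (2 * L) by field_simp; ring, lt_div_iff₀ h2L]
  nlinarith [mul_pos hδ hL, mul_pos hδ hc, mul_lt_mul_of_pos_right hcδ hc,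
    mul_lt_mul_of_pos_right hcδ hL]

theorem selfish_user_benefits_from_altruism_general
    (r L δ c : ℝ) (hδ : 0 < δ) (hδL : δ < L) (hLc : L < c)
    (hc₂ : c < (r - 4 * δ) * L / δ)
    (ζ : ℝ) (hζ : ζ = c * δ / (2 * L)) :
    J₂ r L δ c r (r - δ) = δ * (c + 2 * L) ∧
    δ * (c + 2 * L) < r * L + (r / 2 - ζ) * c ∧
    J₂ r L δ c (r / 2 + ζ) (r / 2 + ζ) = r * L + (r / 2 - ζ) * c := by
  have hL : 0 < L := hδ.trans hδL
  have hc₂' : c * δ + 4 * δ * L < r * L := by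
    rw [lt_div_iff₀ hδ] at hc₂
    linarith
  refine ⟨J₂_altruistic r c hδ.ne' hL.le, ?_, ?_⟩
  · rw [hζ]
    exact altruistic_cost_lt_nash_cost hδ hL (hL.trans hLc) hc₂'
  · rw [J₂_diag r δ c _ hL.le]
    ring

theorem selfish_user_benefits_from_altruism
    (r L δ c : ℝ) (hδ : 0 < δ) (hδL : δ < L) (hLc : L < c) (hcδ : c * δ < r * L)
    (hr : 4 * δ < r) (hc₁ : 4 * L ≤ c) (hc₂ : c < (r - 4 * δ) * L / δ)
    (ζ : ℝ) (hζ : ζ = c * δ / (2 * L)) :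
    J₂ r L δ c r (r - δ) = δ * (c + 2 * L) ∧
    δ * (c + 2 * L) < r * L + (r / 2 - ζ) * c ∧
    J₂ r L δ c (r / 2 + ζ) (r / 2 + ζ) = r * L + (r / 2 - ζ) * c :=
  selfish_user_benefits_from_altruism_general r L δ c hδ hδL hLc hc₂ ζ hζ
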